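/- arXiv:1210.1013 — 7 statements merged into one kernel-verified Lean document; each statement's English description precedes it below -/
import Mathlib

section
/- Let Γ > 0 and s₀ > 0. Set α = s₀/(Γ + s₀) and β = log(1 + s₀/Γ) − α·log(s₀). Then for every s > 0 one has log(1 + s/Γ) ≥ α·log(s) + β, and equality holds if and only if s = s₀. -/
/- With `α = s₀/(Γ+s₀)` and `u = s/s₀`, one has `(Γ+s)/(Γ+s₀) = α u + (1-α)`, so the gap between
the two sides is `log (α u + (1-α)) - α log u = log (α u + (1-α) ⋅ 1) - (α log u + (1-α) log 1)`,
which is positive for `u ≠ 1` by strict concavity of `log`. -/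

open Real Set

lemma mul_log_lt_log_add_one_sub {a u : ℝ} (ha₀ : 0 < a) (ha₁ : a < 1) (hu : 0 < u)
    (hu₁ : u ≠ 1) : a * log u < log (a * u + (1 - a)) := by
  simpa using strictConcaveOn_log_Ioi.2 (mem_Ioi.2 hu) (mem_Ioi.2 one_pos) hu₁ ha₀
    (sub_pos.2 ha₁) (add_sub_cancel a 1)

lemma mul_log_le_log_add_one_sub {a u : ℝ} (ha₀ : 0 < a) (ha₁ : a < 1) (hu : 0 < u) :
    a * log u ≤ log (a * u + (1 - a)) := by
  rcases eq_or_ne u 1 with rfl | hu₁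
  · simp
  · exact (mul_log_lt_log_add_one_sub ha₀ ha₁ hu hu₁).le

lemma mul_log_eq_log_add_one_sub_iff {a u : ℝ} (ha₀ : 0 < a) (ha₁ : a < 1) (hu : 0 < u) :
    a * log u = log (a * u + (1 - a)) ↔ u = 1 := by
  refine ⟨fun h => by_contra fun hu₁ => (mul_log_lt_log_add_one_sub ha₀ ha₁ hu hu₁).ne h, ?_⟩
  rintro rfl
  simp

lemma log_one_add_div_sub_log_one_add_div {Γ s s₀ : ℝ} (hΓ : 0 < Γ) (hs : 0 < s) (hs₀ : 0 < s₀) :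
    log (1 + s / Γ) - log (1 + s₀ / Γ) =
      log (s₀ / (Γ + s₀) * (s / s₀) + (1 - s₀ / (Γ + s₀))) := by
  rw [← log_div (by positivity) (by positivity)]
  congr 1
  field_simp
  ring

/-- the scalar SCALE lower bound. With `α = s₀/(Γ+s₀)` and
`β = log(1+s₀/Γ) - α·log s₀`, for every `s > 0` one has
`log(1+s/Γ) ≥ α·log s + β`, with equality iff `s = s₀`. -/
theorem scale_scalar_bound (Γ s₀ : ℝ) (hΓ : 0 < Γ) (hs₀ : 0 < s₀) :
    ∀ s : ℝ, 0 < s →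
      Real.log (1 + s / Γ) ≥
          s₀ / (Γ + s₀) * Real.log s +
            (Real.log (1 + s₀ / Γ) - s₀ / (Γ + s₀) * Real.log s₀) ∧
        (Real.log (1 + s / Γ) =
            s₀ / (Γ + s₀) * Real.log s +
              (Real.log (1 + s₀ / Γ) - s₀ / (Γ + s₀) * Real.log s₀) ↔ s = s₀) := by
  intro s hs
  have hgap := log_one_add_div_sub_log_one_add_div hΓ hs hs₀
  set α := s₀ / (Γ + s₀)
  have hα₀ : 0 < α := by positivity
  have hα₁ : α < 1 := (div_lt_one (by positivity)).2 (by linarith)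
  have hu : 0 < s / s₀ := by positivity
  have hlog_u : α * log (s / s₀) = α * log s - α * log s₀ := by
    rw [log_div hs.ne' hs₀.ne', mul_sub]
  have hle := mul_log_le_log_add_one_sub hα₀ hα₁ hu
  have hiff := mul_log_eq_log_add_one_sub_iff hα₀ hα₁ hu
  rw [div_eq_one_iff_eq hs₀.ne'] at hiff
  refine ⟨by linarith, fun h => hiff.1 (by linarith), ?_⟩
  rintro rfl
  ring
end

section
/- Fix integers K ≥ 1 and N ≥ 1, weights w_k > 0 for k ∈ {1,…,K}, and Γ > 0. Then the function f : ℝ^{K×N} → ℝ defined by f(Φ) = Σ_{k=1}^K Σ_{n=1}^N w_k·log(1 + e^{Φ_{kn}}/Γ) is strictly convex. -/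
/-!
Each summand is a positive multiple of `x ↦ log (1 + eˣ / Γ)`, whose derivative `eˣ / (Γ + eˣ)`
is strictly increasing, so it is strictly convex. A separable sum `x ↦ ∑ i, fᵢ (xᵢ)` of strictly
convex functions is strictly convex, because two distinct points differ in some coordinate, where
the inequality is strict. Applying this once to the carriers of a user and once to the users
gives the theorem.
-/

open Real Set

theorem StrictConvexOn.smul {𝕜 E β : Type*} [CommSemiring 𝕜] [PartialOrder 𝕜]
    [AddCommMonoid E] [SMul 𝕜 E] [AddCommMonoid β] [PartialOrder β] [Module 𝕜 β]
    [PosSMulStrictMono 𝕜 β] {s : Set E} {f : E → β} {c : 𝕜} (hc : 0 < c)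
    (hf : StrictConvexOn 𝕜 s f) : StrictConvexOn 𝕜 s fun x => c • f x :=
  ⟨hf.1, fun x hx y hy hxy a b ha hb hab =>
    calc
      c • f (a • x + b • y) < c • (a • f x + b • f y) :=
        smul_lt_smul_of_pos_left (hf.2 hx hy hxy ha hb hab) hc
      _ = a • c • f x + b • c • f y := by rw [smul_add, smul_comm c, smul_comm c]⟩

theorem strictConvexOn_pi_sum {𝕜 β ι : Type*} [Fintype ι] {E : ι → Type*}
    [Semiring 𝕜] [PartialOrder 𝕜] [∀ i, AddCommMonoid (E i)] [∀ i, Module 𝕜 (E i)]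
    [AddCommMonoid β] [PartialOrder β] [IsOrderedCancelAddMonoid β] [Module 𝕜 β]
    {s : ∀ i, Set (E i)} {f : ∀ i, E i → β} (hf : ∀ i, StrictConvexOn 𝕜 (s i) (f i)) :
    StrictConvexOn 𝕜 (univ.pi s) fun x => ∑ i, f i (x i) := by
  refine ⟨convex_pi fun i _ => (hf i).1, fun x hx y hy hxy a b ha hb hab => ?_⟩
  obtain ⟨j, hj⟩ := Function.ne_iff.mp hxy
  rw [Finset.smul_sum, Finset.smul_sum, ← Finset.sum_add_distrib]
  refine Finset.sum_lt_sum (fun i _ => ?_) ⟨j, Finset.mem_univ j, ?_⟩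
  · exact (hf i).convexOn.2 (hx i trivial) (hy i trivial) ha.le hb.le hab
  · exact (hf j).2 (hx j trivial) (hy j trivial) hj ha hb hab

theorem hasDerivAt_log_one_add_exp_div {c : ℝ} (hc : 0 < c) (x : ℝ) :
    HasDerivAt (fun x => log (1 + exp x / c)) (exp x / (c + exp x)) x := by
  have hpos : 0 < 1 + exp x / c := by positivity
  convert (((hasDerivAt_exp x).div_const c).const_add 1).log hpos.ne' using 1
  field_simp

theorem strictConvexOn_log_one_add_exp_div {c : ℝ} (hc : 0 < c) :
    StrictConvexOn ℝ univ fun x => log (1 + exp x / c) := by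
  have hderiv : deriv (fun x => log (1 + exp x / c)) = fun x => exp x / (c + exp x) :=
    funext fun x => (hasDerivAt_log_one_add_exp_div hc x).deriv
  refine StrictMono.strictConvexOn_univ_of_deriv ?_ ?_
  · exact continuous_iff_continuousAt.2 fun x =>
      (hasDerivAt_log_one_add_exp_div hc x).continuousAt
  · rw [hderiv]
    intro x y hxy
    have hexp := exp_lt_exp.2 hxy
    rw [div_lt_div_iff₀ (by positivity) (by positivity)]
    nlinarith

theorem wsr_strictConvex_logSINR_general (K N : ℕ)
    (w : Fin K → ℝ) (hw : ∀ k, 0 < w k) (Γ : ℝ) (hΓ : 0 < Γ) :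
    StrictConvexOn ℝ Set.univ
      (fun Φ : Fin K → Fin N → ℝ =>
        ∑ k, ∑ n, w k * Real.log (1 + Real.exp (Φ k n) / Γ)) := by
  have hrow (k : Fin K) :
      StrictConvexOn ℝ univ fun v : Fin N → ℝ => ∑ n, w k * log (1 + exp (v n) / Γ) := by
    simpa using strictConvexOn_pi_sum fun _ : Fin N =>
      (strictConvexOn_log_one_add_exp_div hΓ).smul (hw k)
  simpa using strictConvexOn_pi_sum hrow

/-- the weighted sum rate, as a function of the matrix `Φ` of
log-SINR variables, `f(Φ) = Σ_k Σ_n w_k log(1 + e^{Φ_{kn}}/Γ)`, is strictly convex. -/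
theorem wsr_strictConvex_logSINR (K N : ℕ) (hK : 1 ≤ K) (hN : 1 ≤ N)
    (w : Fin K → ℝ) (hw : ∀ k, 0 < w k) (Γ : ℝ) (hΓ : 0 < Γ) :
    StrictConvexOn ℝ Set.univ
      (fun Φ : Fin K → Fin N → ℝ =>
        ∑ k, ∑ n, w k * Real.log (1 + Real.exp (Φ k n) / Γ)) :=
  wsr_strictConvex_logSINR_general K N w hw Γ hΓ
end

section
/- Fix integers K ≥ 1 and N ≥ 1. For k,l ∈ {1,…,K} and n ∈ {1,…,N} let channel power gains g_{kln} > 0, noise powers σ_{kn}² > 0, rate weights w_k > 0, and an SINR gap Γ ≥ 1 be given. Let P⁰ ∈ ℝ^{K×N} have all entries strictly positive, and set a_{kn} = w_k·SINR_{kn}(P⁰)/(Γ + SINR_{kn}(P⁰)). Then for every P ∈ ℝ^{K×N} with all entries strictly positive, g(P) ≥ g(P⁰) + Σ_{k=1}^K Σ_{n=1}^N a_{kn}·log( SINR_{kn}(P)/SINR_{kn}(P⁰) ), with equality if and only if SINR_{kn}(P) = SINR_{kn}(P⁰) for all k and n. -/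
/-!
Each summand of `g` is `w_k` times the rate `z ↦ log (1 + z / Γ)` of the SINR `z`. At the point
`z₀` this rate is bounded below by `log (1 + z₀ / Γ) + α log (z / z₀)` with
`α = z₀ / (Γ + z₀) ∈ (0, 1)`: after subtracting `log (1 + z₀ / Γ)` the claim reads
`α log s ≤ log (α s + (1 - α))` for `s = z / z₀`, which is concavity of `log` between `s` and `1`,
strict unless `s = 1`. Summing the termwise bounds with positive weights gives the inequality,
and equality of the sums forces equality in every term.
-/

/-- Interference-plus-noise power `I_{kn}(P) = σ_{kn}² + Σ_{l≠k} g_{kln} P_{ln}`. -/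
noncomputable def interf (K N : ℕ) (g : Fin K → Fin K → Fin N → ℝ)
    (σ2 : Fin K → Fin N → ℝ) (P : Fin K → Fin N → ℝ) (k : Fin K) (n : Fin N) : ℝ :=
  σ2 k n + ∑ l ∈ Finset.univ.erase k, g k l n * P l n

/-- SINR `SINR_{kn}(P) = g_{kkn} P_{kn} / I_{kn}(P)`. -/
noncomputable def sinr (K N : ℕ) (g : Fin K → Fin K → Fin N → ℝ)
    (σ2 : Fin K → Fin N → ℝ) (P : Fin K → Fin N → ℝ) (k : Fin K) (n : Fin N) : ℝ :=
  g k k n * P k n / interf K N g σ2 P k n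

/-- Weighted sum rate `g(P) = Σ_k Σ_n w_k log(1 + SINR_{kn}(P)/Γ)`. -/
noncomputable def wsr (K N : ℕ) (g : Fin K → Fin K → Fin N → ℝ)
    (σ2 : Fin K → Fin N → ℝ) (w : Fin K → ℝ) (Γ : ℝ)
    (P : Fin K → Fin N → ℝ) : ℝ :=
  ∑ k, ∑ n, w k * Real.log (1 + sinr K N g σ2 P k n / Γ)

open Real Finset

noncomputable def scaleSurrogate (Γ z₀ z : ℝ) : ℝ :=
  log (1 + z₀ / Γ) + z₀ / (Γ + z₀) * log (z / z₀)

theorem mul_log_lt_log_add_one_sub_s5 {α s : ℝ} (hα₀ : 0 < α) (hα₁ : α < 1) (hs : 0 < s)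
    (hs₁ : s ≠ 1) : α * log s < log (α * s + (1 - α)) := by
  have h := strictConcaveOn_log_Ioi.2 (Set.mem_Ioi.2 hs) (Set.mem_Ioi.2 one_pos) hs₁ hα₀
    (sub_pos.2 hα₁) (by ring)
  simpa only [smul_eq_mul, mul_one, log_one, mul_zero, add_zero] using h

theorem scaleSurrogate_lt {Γ z₀ z : ℝ} (hΓ : 0 < Γ) (hz₀ : 0 < z₀) (hz : 0 < z) (hne : z ≠ z₀) :
    scaleSurrogate Γ z₀ z < log (1 + z / Γ) := by
  have hΓz₀ : 0 < Γ + z₀ := by linarith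
  have hΓz : 0 < Γ + z := by linarith
  have hconv : z₀ / (Γ + z₀) * (z / z₀) + (1 - z₀ / (Γ + z₀)) = (Γ + z) / (Γ + z₀) := by
    field_simp
    ring
  have hlt := mul_log_lt_log_add_one_sub_s5 (div_pos hz₀ hΓz₀) ((div_lt_one hΓz₀).2 (by linarith))
    (div_pos hz hz₀) (by rwa [ne_eq, div_eq_one_iff_eq hz₀.ne'])
  rw [hconv, log_div hΓz.ne' hΓz₀.ne'] at hlt
  have hlog : ∀ x, 0 < Γ + x → log (1 + x / Γ) = log (Γ + x) - log Γ := fun x hx => by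
    rw [← log_div hx.ne' hΓ.ne', add_div, div_self hΓ.ne']
  rw [scaleSurrogate, hlog z hΓz, hlog z₀ hΓz₀]
  linarith

theorem scaleSurrogate_self (Γ z₀ : ℝ) : scaleSurrogate Γ z₀ z₀ = log (1 + z₀ / Γ) := by
  by_cases hz₀ : z₀ = 0 <;> simp [scaleSurrogate, hz₀]

theorem scaleSurrogate_le {Γ z₀ z : ℝ} (hΓ : 0 < Γ) (hz₀ : 0 < z₀) (hz : 0 < z) :
    scaleSurrogate Γ z₀ z ≤ log (1 + z / Γ) := by
  rcases eq_or_ne z z₀ with rfl | hne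
  · exact (scaleSurrogate_self Γ z).le
  · exact (scaleSurrogate_lt hΓ hz₀ hz hne).le

theorem scaleSurrogate_eq_iff {Γ z₀ z : ℝ} (hΓ : 0 < Γ) (hz₀ : 0 < z₀) (hz : 0 < z) :
    scaleSurrogate Γ z₀ z = log (1 + z / Γ) ↔ z = z₀ := by
  refine ⟨fun heq => by_contra fun hne => (scaleSurrogate_lt hΓ hz₀ hz hne).ne heq, ?_⟩
  rintro rfl
  exact scaleSurrogate_self Γ z

theorem Fintype.sum_sum_eq_sum_sum_iff_of_le {ι κ M : Type*} [Fintype ι] [Fintype κ]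
    [AddCommMonoid M] [PartialOrder M] [IsOrderedCancelAddMonoid M] {f h : ι → κ → M}
    (hfh : ∀ i j, f i j ≤ h i j) :
    ∑ i, ∑ j, f i j = ∑ i, ∑ j, h i j ↔ ∀ i j, f i j = h i j := by
  rw [Finset.sum_eq_sum_iff_of_le fun i _ => Finset.sum_le_sum fun j _ => hfh i j]
  simp only [Finset.mem_univ, true_imp_iff,
    Finset.sum_eq_sum_iff_of_le fun j (_ : j ∈ Finset.univ) => hfh _ j]

section SINR

variable {K N : ℕ} (g : Fin K → Fin K → Fin N → ℝ) (σ2 : Fin K → Fin N → ℝ)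
  (P : Fin K → Fin N → ℝ)

theorem interf_pos (hg : ∀ k l n, 0 ≤ g k l n) (hσ : ∀ k n, 0 < σ2 k n)
    (hP : ∀ k n, 0 ≤ P k n) (k : Fin K) (n : Fin N) : 0 < interf K N g σ2 P k n :=
  add_pos_of_pos_of_nonneg (hσ k n) (sum_nonneg fun l _ => mul_nonneg (hg k l n) (hP l n))

theorem sinr_pos (hg : ∀ k l n, 0 < g k l n) (hσ : ∀ k n, 0 < σ2 k n)
    (hP : ∀ k n, 0 < P k n) (k : Fin K) (n : Fin N) : 0 < sinr K N g σ2 P k n :=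
  div_pos (mul_pos (hg k k n) (hP k n))
    (interf_pos g σ2 P (fun k l n => (hg k l n).le) hσ (fun k n => (hP k n).le) k n)

theorem wsr_add_surrogate_eq_sum_scaleSurrogate (w : Fin K → ℝ) (Γ : ℝ)
    (P0 : Fin K → Fin N → ℝ) :
    wsr K N g σ2 w Γ P0 +
        ∑ k, ∑ n, w k * sinr K N g σ2 P0 k n / (Γ + sinr K N g σ2 P0 k n) *
          log (sinr K N g σ2 P k n / sinr K N g σ2 P0 k n) =
      ∑ k, ∑ n, w k * scaleSurrogate Γ (sinr K N g σ2 P0 k n) (sinr K N g σ2 P k n) := by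
  simp only [wsr, scaleSurrogate, ← sum_add_distrib, mul_add, mul_div_assoc, mul_assoc]

end SINR

theorem scale_surrogate_lower_bound_general (K N : ℕ)
    (g : Fin K → Fin K → Fin N → ℝ) (hg : ∀ k l n, 0 < g k l n)
    (σ2 : Fin K → Fin N → ℝ) (hσ : ∀ k n, 0 < σ2 k n)
    (w : Fin K → ℝ) (hw : ∀ k, 0 < w k) (Γ : ℝ) (hΓ : 1 ≤ Γ)
    (P0 : Fin K → Fin N → ℝ) (hP0 : ∀ k n, 0 < P0 k n) :
    ∀ P : Fin K → Fin N → ℝ, (∀ k n, 0 < P k n) →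
      wsr K N g σ2 w Γ P ≥
          wsr K N g σ2 w Γ P0 +
            ∑ k, ∑ n,
              w k * sinr K N g σ2 P0 k n / (Γ + sinr K N g σ2 P0 k n) *
                Real.log (sinr K N g σ2 P k n / sinr K N g σ2 P0 k n) ∧
        (wsr K N g σ2 w Γ P =
            wsr K N g σ2 w Γ P0 +
              ∑ k, ∑ n,
                w k * sinr K N g σ2 P0 k n / (Γ + sinr K N g σ2 P0 k n) *
                  Real.log (sinr K N g σ2 P k n / sinr K N g σ2 P0 k n) ↔
          ∀ k n, sinr K N g σ2 P k n = sinr K N g σ2 P0 k n) := by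
  intro P hP
  have hΓ₀ : 0 < Γ := one_pos.trans_le hΓ
  have hz := sinr_pos g σ2 P hg hσ hP
  have hz₀ := sinr_pos g σ2 P0 hg hσ hP0
  have hle : ∀ k n, w k * scaleSurrogate Γ (sinr K N g σ2 P0 k n) (sinr K N g σ2 P k n) ≤
      w k * log (1 + sinr K N g σ2 P k n / Γ) := fun k n =>
    mul_le_mul_of_nonneg_left (scaleSurrogate_le hΓ₀ (hz₀ k n) (hz k n)) (hw k).le
  rw [wsr_add_surrogate_eq_sum_scaleSurrogate, ge_iff_le, eq_comm]
  refine ⟨sum_le_sum fun k _ => sum_le_sum fun n _ => hle k n, ?_⟩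
  rw [wsr, Fintype.sum_sum_eq_sum_sum_iff_of_le hle]
  simp only [mul_right_inj' (hw _).ne']
  exact forall₂_congr fun k n => scaleSurrogate_eq_iff hΓ₀ (hz₀ k n) (hz k n)

/-- the SCALE surrogate `g(P⁰) + Σ_{k,n} a_{kn} log(SINR_{kn}(P)/SINR_{kn}(P⁰))`,
with `a_{kn} = w_k SINR_{kn}(P⁰)/(Γ + SINR_{kn}(P⁰))`, is a lower bound of the weighted
sum rate `g(P)` on the positive orthant, with equality iff all SINRs coincide with
those at `P⁰`. -/
theorem scale_surrogate_lower_bound (K N : ℕ) (hK : 1 ≤ K) (hN : 1 ≤ N)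
    (g : Fin K → Fin K → Fin N → ℝ) (hg : ∀ k l n, 0 < g k l n)
    (σ2 : Fin K → Fin N → ℝ) (hσ : ∀ k n, 0 < σ2 k n)
    (w : Fin K → ℝ) (hw : ∀ k, 0 < w k) (Γ : ℝ) (hΓ : 1 ≤ Γ)
    (P0 : Fin K → Fin N → ℝ) (hP0 : ∀ k n, 0 < P0 k n) :
    ∀ P : Fin K → Fin N → ℝ, (∀ k n, 0 < P k n) →
      wsr K N g σ2 w Γ P ≥
          wsr K N g σ2 w Γ P0 +
            ∑ k, ∑ n,
              w k * sinr K N g σ2 P0 k n / (Γ + sinr K N g σ2 P0 k n) *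
                Real.log (sinr K N g σ2 P k n / sinr K N g σ2 P0 k n) ∧
        (wsr K N g σ2 w Γ P =
            wsr K N g σ2 w Γ P0 +
              ∑ k, ∑ n,
                w k * sinr K N g σ2 P0 k n / (Γ + sinr K N g σ2 P0 k n) *
                  Real.log (sinr K N g σ2 P k n / sinr K N g σ2 P0 k n) ↔
          ∀ k n, sinr K N g σ2 P k n = sinr K N g σ2 P0 k n) :=
  scale_surrogate_lower_bound_general K N g hg σ2 hσ w hw Γ hΓ P0 hP0
end

section
/- Let f : ℝ^d → ℝ be differentiable and strictly convex, let S ⊆ ℝ^d, let x ∈ S, and suppose y ∈ S satisfies ⟨∇f(x), y⟩ ≥ ⟨∇f(x), z⟩ for all z ∈ S. If f(y) = f(x), then y = x, and moreover ⟨∇f(x), z − x⟩ ≤ 0 for all z ∈ S; that is, x is a fixed point of the iteration and a stationary point of f over S. -/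
open RealInnerProductSpace

/-!
Strict convexity puts `f` strictly above its tangent plane at `x`, so
`f y > f x + ⟪∇f(x), y - x⟫` whenever `y ≠ x`. If `y` maximizes `⟪∇f(x), ·⟫` over
`S ∋ x`, then `⟪∇f(x), y - x⟫ ≥ 0`, hence `f y > f x` unless
`y = x`. With `y = x`, maximality is exactly the stationarity inequality.
-/

theorem StrictConvexOn.comp_affineMap_of_injective {𝕜 E F β : Type*} [Ring 𝕜]
    [PartialOrder 𝕜] [AddCommGroup E] [AddCommGroup F] [AddCommMonoid β] [PartialOrder β]
    [Module 𝕜 E] [Module 𝕜 F] [SMul 𝕜 β] {f : F → β} (g : E →ᵃ[𝕜] F)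
    (hg : Function.Injective g) {s : Set F} (hf : StrictConvexOn 𝕜 s f) :
    StrictConvexOn 𝕜 (g ⁻¹' s) (f ∘ g) :=
  ⟨hf.1.affine_preimage _, fun x hx y hy hxy a b ha hb hab =>
    calc
      (f ∘ g) (a • x + b • y) = f (a • g x + b • g y) := by
        rw [Function.comp_apply, Convex.combo_affine_apply hab]
      _ < a • f (g x) + b • f (g y) := hf.2 hx hy (hg.ne hxy) ha hb hab⟩

section Tangent

variable {E : Type*}

theorem StrictConvexOn.add_apply_sub_lt [NormedAddCommGroup E] [NormedSpace ℝ E]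
    {f : E → ℝ} {f' : StrongDual ℝ E} {s : Set E} {x y : E} (hf : StrictConvexOn ℝ s f)
    (hx : x ∈ s) (hy : y ∈ s) (hxy : x ≠ y) (hf' : HasFDerivAt f f' x) :
    f x + f' (y - x) < f y := by
  set ℓ : ℝ →ᵃ[ℝ] E := AffineMap.lineMap x y
  have hline : StrictConvexOn ℝ (ℓ ⁻¹' s) (f ∘ ℓ) :=
    hf.comp_affineMap_of_injective ℓ (AffineMap.lineMap_injective ℝ hxy)
  have hℓ0 : ℓ 0 = x := AffineMap.lineMap_apply_zero x y
  have hℓ1 : ℓ 1 = y := AffineMap.lineMap_apply_one x y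
  have hderiv : HasDerivAt (f ∘ ℓ) (f' (y - x)) 0 :=
    hf'.comp_hasDerivAt_of_eq 0 AffineMap.hasDerivAt_lineMap hℓ0.symm
  have hslope := hline.lt_slope_of_hasDerivAt (by simpa [hℓ0] using hx)
    (by simpa [hℓ1] using hy) zero_lt_one hderiv
  rw [slope_def_field, Function.comp_apply, Function.comp_apply, hℓ0, hℓ1, sub_zero,
    div_one] at hslope
  linarith

theorem StrictConvexOn.add_inner_sub_lt [NormedAddCommGroup E] [InnerProductSpace ℝ E]
    [CompleteSpace E] {f : E → ℝ} {f' : E} {s : Set E} {x y : E} (hf : StrictConvexOn ℝ s f)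
    (hx : x ∈ s) (hy : y ∈ s) (hxy : x ≠ y) (hf' : HasGradientAt f f' x) :
    f x + ⟪f', y - x⟫ < f y :=
  hf.add_apply_sub_lt hx hy hxy hf'.hasFDerivAt

end Tangent

theorem fixed_point_of_no_increase_general (d : ℕ)
    (f : EuclideanSpace ℝ (Fin d) → ℝ)
    (hdiff : Differentiable ℝ f) (hconv : StrictConvexOn ℝ Set.univ f)
    (S : Set (EuclideanSpace ℝ (Fin d)))
    (x : EuclideanSpace ℝ (Fin d)) (hx : x ∈ S)
    (y : EuclideanSpace ℝ (Fin d))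
    (hmax : ∀ z ∈ S, ⟪gradient f x, z⟫ ≤ ⟪gradient f x, y⟫) :
    f y = f x → y = x ∧ ∀ z ∈ S, ⟪gradient f x, z - x⟫ ≤ 0 := by
  intro hfy
  have hyx : y = x := by
    by_contra hne
    have htangent := hconv.add_inner_sub_lt (Set.mem_univ x) (Set.mem_univ y) (Ne.symm hne)
      (hdiff x).hasGradientAt
    have hxy := hmax x hx
    rw [inner_sub_right] at htangent
    linarith
  subst hyx
  refine ⟨rfl, fun z hz => ?_⟩
  rw [inner_sub_right]
  linarith [hmax z hz]

/-- first claim of Theorem 1: if `f` is differentiable and strictly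
convex, `y ∈ S` maximizes `z ↦ ⟪∇f(x), z⟫` over `S`, and `f(y) = f(x)`, then `y = x`
and `x` is a stationary point of `f` over `S`, i.e. `⟪∇f(x), z − x⟫ ≤ 0` for all `z ∈ S`. -/
theorem fixed_point_of_no_increase (d : ℕ)
    (f : EuclideanSpace ℝ (Fin d) → ℝ)
    (hdiff : Differentiable ℝ f) (hconv : StrictConvexOn ℝ Set.univ f)
    (S : Set (EuclideanSpace ℝ (Fin d)))
    (x : EuclideanSpace ℝ (Fin d)) (hx : x ∈ S)
    (y : EuclideanSpace ℝ (Fin d)) (hy : y ∈ S)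
    (hmax : ∀ z ∈ S, ⟪gradient f x, z⟫ ≤ ⟪gradient f x, y⟫) :
    f y = f x → y = x ∧ ∀ z ∈ S, ⟪gradient f x, z - x⟫ ≤ 0 :=
  fixed_point_of_no_increase_general d f hdiff hconv S x hx y hmax
end

section
/- Let f : ℝ^d → ℝ be differentiable and strictly convex, let S ⊆ ℝ^d, and let (x^m)_{m≥1} be a sequence in S such that for every m, x^{m+1} ∈ S and ⟨∇f(x^m), x^{m+1}⟩ ≥ ⟨∇f(x^m), z⟩ for all z ∈ S. Let F = { x ∈ S : ⟨∇f(x), z − x⟩ ≤ 0 for all z ∈ S } be the set of fixed points, and let f* = sup_{z∈S} f(z). Suppose f(x^1) > f(x) for every x ∈ F with f(x) < f*. If there exists m with f(x^{m+1}) = f(x^m), then f(x^m) = f*. -/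
/-!
A convex function lies above its tangent planes, so an iterate that does not decrease the
linearization `⟪∇f(xₘ), ·⟫` does not decrease `f`: the values `f(xₘ)` increase from `f(x₁)`.
Strict convexity makes the tangent inequality strict off the base point, so a stall
`f(xₘ₊₁) = f(xₘ)` forces `xₘ₊₁ = xₘ`, which makes `xₘ` a fixed point. Its value is at least
`f(x₁)`, hence not below `f*`.
-/

open RealInnerProductSpace Set

section Tangent

variable {E : Type*} [NormedAddCommGroup E] [NormedSpace ℝ E] {s : Set E} {f : E → ℝ}
  {f' : E →L[ℝ] ℝ} {x y : E}

theorem ConvexOn.add_fderiv_sub_le (hf : ConvexOn ℝ s f) (hx : x ∈ s) (hy : y ∈ s)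
    (hfx : HasFDerivAt f f' x) : f x + f' (y - x) ≤ f y := by
  set g : ℝ → ℝ := f ∘ AffineMap.lineMap x y
  have hg : ConvexOn ℝ (Icc 0 1) g :=
    (hf.comp_affineMap _).subset (hf.1.mapsTo_lineMap hx hy) (convex_Icc 0 1)
  have hg' : HasDerivAt g (f' (y - x)) 0 := by
    rw [← AffineMap.lineMap_apply_zero x y (k := ℝ)] at hfx
    exact hfx.comp_hasDerivAt 0 AffineMap.hasDerivAt_lineMap
  have hslope := hg.le_slope_of_hasDerivAt (by simp) (by simp) zero_lt_one hg'
  simp only [g, slope_def_field, Function.comp_apply, AffineMap.lineMap_apply_zero,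
    AffineMap.lineMap_apply_one, sub_zero, div_one] at hslope
  linarith

theorem StrictConvexOn.add_fderiv_sub_lt (hf : StrictConvexOn ℝ s f) (hx : x ∈ s) (hy : y ∈ s)
    (hxy : x ≠ y) (hfx : HasFDerivAt f f' x) : f x + f' (y - x) < f y := by
  have hhalf : (0 : ℝ) < 1 / 2 := by norm_num
  have hstrict := hf.2 hx hy hxy hhalf hhalf (by norm_num)
  have htangent :=
    hf.convexOn.add_fderiv_sub_le hx (hf.1 hx hy hhalf.le hhalf.le (by norm_num)) hfx
  rw [show (1 / 2 : ℝ) • x + (1 / 2 : ℝ) • y - x = (1 / 2 : ℝ) • (y - x) by module,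
    map_smul, smul_eq_mul] at htangent
  simp only [smul_eq_mul] at hstrict
  linarith

end Tangent

section Gradient

variable {E : Type*} [NormedAddCommGroup E] [InnerProductSpace ℝ E] [CompleteSpace E]
  {s : Set E} {f : E → ℝ} {x y : E}

theorem ConvexOn.add_inner_gradient_sub_le (hf : ConvexOn ℝ s f) (hx : x ∈ s) (hy : y ∈ s)
    (hfx : DifferentiableAt ℝ f x) : f x + ⟪gradient f x, y - x⟫ ≤ f y :=
  hf.add_fderiv_sub_le hx hy hfx.hasGradientAt.hasFDerivAt

theorem StrictConvexOn.add_inner_gradient_sub_lt (hf : StrictConvexOn ℝ s f) (hx : x ∈ s)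
    (hy : y ∈ s) (hxy : x ≠ y) (hfx : DifferentiableAt ℝ f x) :
    f x + ⟪gradient f x, y - x⟫ < f y :=
  hf.add_fderiv_sub_lt hx hy hxy hfx.hasGradientAt.hasFDerivAt

theorem ConvexOn.le_of_inner_gradient_sub_nonneg (hf : ConvexOn ℝ s f) (hx : x ∈ s) (hy : y ∈ s)
    (hfx : DifferentiableAt ℝ f x) (h : 0 ≤ ⟪gradient f x, y - x⟫) : f x ≤ f y := by
  linarith [hf.add_inner_gradient_sub_le hx hy hfx]

theorem StrictConvexOn.eq_of_inner_gradient_sub_nonneg_of_le (hf : StrictConvexOn ℝ s f)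
    (hx : x ∈ s) (hy : y ∈ s) (hfx : DifferentiableAt ℝ f x) (h : 0 ≤ ⟪gradient f x, y - x⟫)
    (hle : f y ≤ f x) : y = x := by
  by_contra hyx
  linarith [hf.add_inner_gradient_sub_lt hx hy (Ne.symm hyx) hfx]

end Gradient

/-- finite-termination case of the second claim of Theorem 1:
for the SCALE-type iteration in which `x (m+1)` maximizes `z ↦ ⟪∇f(x m), z⟫` over `S`,
if the initialization `x 1` has objective value above that of every non-globally-optimal
fixed point, and the iteration stalls at some step `m ≥ 1`, then it has reached the
supremum `f*` of `f` over `S`. -/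
theorem stalled_iterate_is_global_max (d : ℕ)
    (f : EuclideanSpace ℝ (Fin d) → ℝ)
    (hdiff : Differentiable ℝ f) (hconv : StrictConvexOn ℝ Set.univ f)
    (S : Set (EuclideanSpace ℝ (Fin d)))
    (x : ℕ → EuclideanSpace ℝ (Fin d))
    (hx : ∀ m, 1 ≤ m → x m ∈ S)
    (hiter : ∀ m, 1 ≤ m → ∀ z ∈ S, ⟪gradient f (x m), z⟫ ≤ ⟪gradient f (x m), x (m + 1)⟫)
    (F : Set (EuclideanSpace ℝ (Fin d)))
    (hF : F = {p | p ∈ S ∧ ∀ z ∈ S, ⟪gradient f p, z - p⟫ ≤ 0})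
    (fstar : ℝ) (hfstar : IsLUB (f '' S) fstar)
    (hinit : ∀ p ∈ F, f p < fstar → f p < f (x 1))
    (m : ℕ) (hm : 1 ≤ m) (hstall : f (x (m + 1)) = f (x m)) :
    f (x m) = fstar := by
  have hgain : ∀ n, 1 ≤ n → 0 ≤ ⟪gradient f (x n), x (n + 1) - x n⟫ := fun n hn => by
    rw [inner_sub_right, sub_nonneg]
    exact hiter n hn _ (hx n hn)
  have hascent : ∀ n, 1 ≤ n → f (x 1) ≤ f (x n) := by
    intro n hn
    induction n, hn using Nat.le_induction with
    | base => rfl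
    | succ n hn ih =>
      exact ih.trans <| hconv.convexOn.le_of_inner_gradient_sub_nonneg (mem_univ _) (mem_univ _)
        (hdiff _) (hgain n hn)
  have hstay : x (m + 1) = x m :=
    hconv.eq_of_inner_gradient_sub_nonneg_of_le (mem_univ _) (mem_univ _) (hdiff _) (hgain m hm)
      hstall.le
  have hfix : x m ∈ F := hF ▸ ⟨hx m hm, fun z hz => by
    rw [inner_sub_right, sub_nonpos]
    simpa only [hstay] using hiter m hm z hz⟩
  refine (hfstar.1 ⟨x m, hx m hm, rfl⟩).eq_of_not_lt fun hlt => ?_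
  exact (hinit _ hfix hlt).not_ge (hascent m hm)
end

section
/- Fix integers K ≥ 1 and N ≥ 1. For k,l ∈ {1,…,K} and n ∈ {1,…,N} let channel power gains g_{kln} > 0, noise powers σ_{kn}² > 0, rate weights w_k > 0, an SINR gap Γ ≥ 1, sum-power budgets P_k^tot > 0, and spectral masks P_{kn}^mask > 0 be given. Let f* = max_{P ∈ 𝒫} g(P) and, for ξ > 0, let f*(ξ) = sup { g(P) : P ∈ 𝒫, P_{kn} ≥ ξ for all k,n }. Suppose 0 < ξ ≤ P_k^tot/(2N(N+1)) for every k and ξ ≤ P_{kn}^mask for every k,n. Then f* ≥ f*(ξ) ≥ f* − 2ξ·N·K²·max_{k,l,n} ( w_l·g_{lkn}/σ_{ln}² ). -/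
open Finset

theorem natCast_mul_le_of_le_div {n : ℕ} {ξ T : ℝ} (hξ : 0 ≤ ξ) (hT : 0 ≤ T)
    (h : ξ ≤ T / (2 * n * (n + 1))) : n * ξ ≤ T := by
  rcases n.eq_zero_or_pos with rfl | hn
  · simpa using hT
  have hn' : (1 : ℝ) ≤ n := by exact_mod_cast hn
  calc (n : ℝ) * ξ ≤ 2 * n * (n + 1) * ξ := by gcongr; nlinarith
    _ ≤ T := (le_div_iff₀' (by positivity)).1 h

theorem IsGreatest.csSup_image_mem_Icc_of_subset {α β : Type*} [ConditionallyCompleteLattice β]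
    {f : α → β} {s t : Set α} {a b : β} {x : α} (ha : IsGreatest (f '' t) a) (hst : s ⊆ t)
    (hx : x ∈ s) (hb : b ≤ f x) : sSup (f '' s) ∈ Set.Icc b a := by
  have hle : ∀ y ∈ f '' s, y ≤ a := fun y hy => ha.2 (Set.image_mono hst hy)
  exact ⟨hb.trans (le_csSup ⟨a, hle⟩ ⟨x, hx, rfl⟩), csSup_le ⟨f x, x, hx, rfl⟩ hle⟩

section FloorScaled

variable {ι κ : Type*} {ξ : ℝ} {c : ι → ℝ} {P : ι → κ → ℝ} {k : ι} {n : κ}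

def floorScaled (ξ : ℝ) (c : ι → ℝ) (P : ι → κ → ℝ) (k : ι) (n : κ) : ℝ :=
  max ξ ((1 - c k) * P k n)

theorem floorScaled_le_mul_add (hξ : 0 ≤ ξ) (hc1 : c k ≤ 1) (hP : 0 ≤ P k n) :
    floorScaled ξ c P k n ≤ (1 - c k) * P k n + ξ :=
  max_le (le_add_of_nonneg_left (mul_nonneg (sub_nonneg.2 hc1) hP)) (le_add_of_nonneg_right hξ)

theorem floorScaled_le_add (hξ : 0 ≤ ξ) (hc0 : 0 ≤ c k) (hc1 : c k ≤ 1) (hP : 0 ≤ P k n) :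
    floorScaled ξ c P k n ≤ P k n + ξ :=
  (floorScaled_le_mul_add hξ hc1 hP).trans (by nlinarith)

theorem floorScaled_le {B : ℝ} (hξB : ξ ≤ B) (hc0 : 0 ≤ c k) (hP : 0 ≤ P k n) (hPB : P k n ≤ B) :
    floorScaled ξ c P k n ≤ B :=
  max_le hξB (by nlinarith)

theorem sum_floorScaled_le [Fintype κ] {T : ℝ} (hξ : 0 ≤ ξ) (hc1 : c k ≤ 1)
    (hP : ∀ n, 0 ≤ P k n) (hPT : ∑ n, P k n ≤ T) (hbudget : Fintype.card κ * ξ ≤ c k * T) :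
    ∑ n, floorScaled ξ c P k n ≤ T :=
  calc ∑ n, floorScaled ξ c P k n ≤ ∑ n, ((1 - c k) * P k n + ξ) :=
        sum_le_sum fun n _ => floorScaled_le_mul_add hξ hc1 (hP n)
    _ = (1 - c k) * ∑ n, P k n + Fintype.card κ * ξ := by
        rw [sum_add_distrib, mul_sum, sum_const, card_univ, nsmul_eq_mul]
    _ ≤ (1 - c k) * T + c k * T := by gcongr
    _ = T := by ring

end FloorScaled

theorem log_one_add_div_sub_log_one_add_le {X Y Z c b : ℝ} (hX : 0 < X) (hY : 0 ≤ Y)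
    (hZ : 0 ≤ Z) (hc0 : 0 ≤ c) (hc1 : c ≤ 1) (hb : (1 - c) * Y / (X + Z) ≤ b) :
    Real.log (1 + Y / X) - Real.log (1 + b) ≤ (c * Y + Z) / X := by
  have hb0 : 0 ≤ b := le_trans (by have := sub_nonneg.2 hc1; positivity) hb
  have hbY : (1 - c) * Y ≤ b * (X + Z) := (div_le_iff₀ (by positivity)).1 hb
  calc Real.log (1 + Y / X) - Real.log (1 + b)
      = Real.log ((1 + Y / X) / (1 + b)) := (Real.log_div (by positivity) (by positivity)).symm
    _ ≤ (1 + Y / X) / (1 + b) - 1 := Real.log_le_sub_one_of_pos (by positivity)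
    _ ≤ (c * Y + Z) / X := by
      rw [div_sub_one (by positivity), div_le_div_iff₀ (by positivity) hX, add_sub_add_left_eq_sub,
        sub_mul, div_mul_cancel₀ _ hX.ne']
      nlinarith [mul_nonneg hb0 (mul_nonneg hc0 hY)]

section Interference

variable {K N : ℕ} {g : Fin K → Fin K → Fin N → ℝ} {σ2 : Fin K → Fin N → ℝ}
  {P Q : Fin K → Fin N → ℝ} {k : Fin K} {n : Fin N}

theorem le_interf (hg : ∀ l, 0 ≤ g k l n) (hP : ∀ l, 0 ≤ P l n) :
    σ2 k n ≤ interf K N g σ2 P k n :=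
  le_add_of_nonneg_right (sum_nonneg fun l _ => mul_nonneg (hg l) (hP l))

theorem interf_le_add {ξ : ℝ} (hg : ∀ l, 0 ≤ g k l n) (hQ : ∀ l, Q l n ≤ P l n + ξ) :
    interf K N g σ2 Q k n ≤ interf K N g σ2 P k n + ξ * ∑ l ∈ univ.erase k, g k l n := by
  rw [interf, interf, add_assoc, mul_sum, ← sum_add_distrib]
  gcongr with l
  nlinarith [hg l, hQ l]

theorem log_one_add_sinr_div_sub_le {Γ c ξ : ℝ} (hg : ∀ l, 0 ≤ g k l n) (hσ : 0 < σ2 k n)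
    (hΓ : 1 ≤ Γ) (hP : ∀ l, 0 ≤ P l n) (hQ : ∀ l, 0 ≤ Q l n) (hξ : 0 ≤ ξ)
    (hc0 : 0 ≤ c) (hc1 : c ≤ 1)
    (hQk : (1 - c) * P k n ≤ Q k n) (hQle : ∀ l, Q l n ≤ P l n + ξ) :
    Real.log (1 + sinr K N g σ2 P k n / Γ) - Real.log (1 + sinr K N g σ2 Q k n / Γ) ≤
      (c * g k k n * P k n + ξ * ∑ l ∈ univ.erase k, g k l n) / σ2 k n := by
  have hIP := le_interf (σ2 := σ2) hg hP
  have hIQ := le_interf (σ2 := σ2) hg hQ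
  have hΓ0 : 0 < Γ := by linarith
  have hS : 0 ≤ ξ * ∑ l ∈ univ.erase k, g k l n := mul_nonneg hξ (sum_nonneg fun l _ => hg l)
  have hgP : 0 ≤ g k k n * P k n := mul_nonneg (hg k) (hP k)
  have hsignal : (1 - c) * (g k k n * P k n / Γ) ≤ g k k n * Q k n / Γ := by
    rw [mul_div_assoc', mul_left_comm]
    gcongr
    exact hg k
  have hloss := log_one_add_div_sub_log_one_add_le (X := interf K N g σ2 P k n)
    (Z := ξ * ∑ l ∈ univ.erase k, g k l n) (b := sinr K N g σ2 Q k n / Γ)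
    (by linarith) (div_nonneg hgP hΓ0.le) hS hc0 hc1 (by
      rw [sinr, div_right_comm]
      exact div_le_div₀ (div_nonneg (mul_nonneg (hg k) (hQ k)) hΓ0.le) hsignal (by linarith)
        (interf_le_add hg hQle))
  rw [sinr, div_right_comm] at hloss
  refine hloss.trans (div_le_div₀ (by nlinarith) ?_ hσ hIP)
  nlinarith [div_le_self hgP hΓ]

end Interference

section RateLoss

variable {K N : ℕ} {g : Fin K → Fin K → Fin N → ℝ} {σ2 : Fin K → Fin N → ℝ} {w : Fin K → ℝ}
  {Γ ξ : ℝ} {c : Fin K → ℝ} {P Q : Fin K → Fin N → ℝ}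

theorem wsr_sub_wsr_le_sum (hg : ∀ k l n, 0 ≤ g k l n) (hσ : ∀ k n, 0 < σ2 k n)
    (hw : ∀ k, 0 ≤ w k) (hΓ : 1 ≤ Γ) (hP : ∀ k n, 0 ≤ P k n) (hQ : ∀ k n, 0 ≤ Q k n)
    (hξ : 0 ≤ ξ) (hc0 : ∀ k, 0 ≤ c k) (hc1 : ∀ k, c k ≤ 1)
    (hQk : ∀ k n, (1 - c k) * P k n ≤ Q k n) (hQle : ∀ k n, Q k n ≤ P k n + ξ) :
    wsr K N g σ2 w Γ P - wsr K N g σ2 w Γ Q ≤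
      ∑ k, ∑ n, w k * ((c k * g k k n * P k n + ξ * ∑ l ∈ univ.erase k, g k l n) / σ2 k n) := by
  simp only [wsr, ← sum_sub_distrib, ← mul_sub]
  gcongr with k _ n _
  · exact hw k
  · exact log_one_add_sinr_div_sub_le (fun l => hg k l n) (hσ k n) hΓ (fun l => hP l n)
      (fun l => hQ l n) hξ (hc0 k) (hc1 k) (hQk k n) (fun l => hQle l n)

theorem wsr_sub_wsr_le (hg : ∀ k l n, 0 ≤ g k l n) (hσ : ∀ k n, 0 < σ2 k n)
    (hw : ∀ k, 0 ≤ w k) (hΓ : 1 ≤ Γ) (hP : ∀ k n, 0 ≤ P k n) (hQ : ∀ k n, 0 ≤ Q k n)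
    (hξ : 0 ≤ ξ) (hc0 : ∀ k, 0 ≤ c k) (hc1 : ∀ k, c k ≤ 1)
    (hQk : ∀ k n, (1 - c k) * P k n ≤ Q k n) (hQle : ∀ k n, Q k n ≤ P k n + ξ)
    (hcP : ∀ k, c k * ∑ n, P k n ≤ N * ξ) {M : ℝ} (hM0 : 0 ≤ M)
    (hM : ∀ k l n, w k * g k l n / σ2 k n ≤ M) :
    wsr K N g σ2 w Γ P - wsr K N g σ2 w Γ Q ≤ ξ * N * K * (K + 1) * M := by
  refine (wsr_sub_wsr_le_sum hg hσ hw hΓ hP hQ hξ hc0 hc1 hQk hQle).trans ?_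
  have hterm : ∀ k n, w k * ((c k * g k k n * P k n + ξ * ∑ l ∈ univ.erase k, g k l n) / σ2 k n)
      ≤ c k * P k n * M + ξ * (K * M) := by
    intro k n
    have hcross : ∑ l ∈ univ.erase k, w k * g k l n / σ2 k n ≤ K * M :=
      calc ∑ l ∈ univ.erase k, w k * g k l n / σ2 k n
          ≤ ∑ l, w k * g k l n / σ2 k n :=
            sum_le_sum_of_subset_of_nonneg (erase_subset _ _) fun l _ _ =>
              div_nonneg (mul_nonneg (hw k) (hg k l n)) (hσ k n).le
        _ ≤ ∑ _l : Fin K, M := sum_le_sum fun l _ => hM k l n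
        _ = K * M := by simp
    have hdirect := mul_le_mul_of_nonneg_left (hM k k n) (mul_nonneg (hc0 k) (hP k n))
    calc w k * ((c k * g k k n * P k n + ξ * ∑ l ∈ univ.erase k, g k l n) / σ2 k n)
        = c k * P k n * (w k * g k k n / σ2 k n) +
            ξ * ∑ l ∈ univ.erase k, w k * g k l n / σ2 k n := by
          rw [← sum_div, ← mul_sum]
          field_simp
      _ ≤ c k * P k n * M + ξ * (K * M) := add_le_add hdirect (by gcongr)
  calc ∑ k, ∑ n, w k * ((c k * g k k n * P k n + ξ * ∑ l ∈ univ.erase k, g k l n) / σ2 k n)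
      ≤ ∑ k, ∑ n, (c k * P k n * M + ξ * (K * M)) := by gcongr with k _ n _; exact hterm k n
    _ = ∑ k, (c k * ∑ n, P k n) * M + K * (N * ξ * K * M) := by
        simp only [sum_add_distrib, ← sum_mul, ← mul_sum, sum_const, card_univ, Fintype.card_fin,
          nsmul_eq_mul]
        ring
    _ ≤ ∑ _k : Fin K, (N * ξ) * M + K * (N * ξ * K * M) :=
        add_le_add_left (sum_le_sum fun k _ => mul_le_mul_of_nonneg_right (hcP k) hM0) _
    _ = ξ * N * K * (K + 1) * M := by
        simp only [sum_const, card_univ, Fintype.card_fin, nsmul_eq_mul]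
        ring

end RateLoss

theorem gp_lower_bound_loss_general (K N : ℕ)
    (g : Fin K → Fin K → Fin N → ℝ) (hg : ∀ k l n, 0 < g k l n)
    (σ2 : Fin K → Fin N → ℝ) (hσ : ∀ k n, 0 < σ2 k n)
    (w : Fin K → ℝ) (hw : ∀ k, 0 < w k) (Γ : ℝ) (hΓ : 1 ≤ Γ)
    (Ptot : Fin K → ℝ) (hPtot : ∀ k, 0 < Ptot k)
    (Pmask : Fin K → Fin N → ℝ)
    (feas : Set (Fin K → Fin N → ℝ))
    (hfeas : feas =
      {P | (∀ k n, 0 ≤ P k n ∧ P k n ≤ Pmask k n) ∧ ∀ k, ∑ n, P k n ≤ Ptot k})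
    (fstar : ℝ) (hfstar : IsGreatest (wsr K N g σ2 w Γ '' feas) fstar)
    (M : ℝ)
    (hM : IsGreatest {x : ℝ | ∃ k l : Fin K, ∃ n : Fin N, x = w l * g l k n / σ2 l n} M)
    (ξ : ℝ) (hξ : 0 < ξ)
    (hξtot : ∀ k, ξ ≤ Ptot k / (2 * N * (N + 1)))
    (hξmask : ∀ k n, ξ ≤ Pmask k n) :
    fstar ≥ sSup (wsr K N g σ2 w Γ '' {P ∈ feas | ∀ k n, ξ ≤ P k n}) ∧
      sSup (wsr K N g σ2 w Γ '' {P ∈ feas | ∀ k n, ξ ≤ P k n}) ≥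
        fstar - 2 * ξ * N * K ^ 2 * M := by
  subst hfeas
  obtain ⟨P, ⟨hPbox, hPsum⟩, rfl⟩ := hfstar.1
  have hP0 : ∀ k n, 0 ≤ P k n := fun k n => (hPbox k n).1
  set c : Fin K → ℝ := fun k => N * ξ / Ptot k
  have hcP : ∀ k, c k * Ptot k = N * ξ := fun k => div_mul_cancel₀ _ (hPtot k).ne'
  have hc0 : ∀ k, 0 ≤ c k := fun k => div_nonneg (by positivity) (hPtot k).le
  have hc1 : ∀ k, c k ≤ 1 := fun k =>
    div_le_one_of_le₀ (natCast_mul_le_of_le_div hξ.le (hPtot k).le (hξtot k)) (hPtot k).le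
  have hQξ : ∀ k n, ξ ≤ floorScaled ξ c P k n := fun k n => le_max_left _ _
  have hQbox : ∀ k n, 0 ≤ floorScaled ξ c P k n ∧ floorScaled ξ c P k n ≤ Pmask k n :=
    fun k n => ⟨hξ.le.trans (hQξ k n), floorScaled_le (hξmask k n) (hc0 k) (hP0 k n) (hPbox k n).2⟩
  have hQsum : ∀ k, ∑ n, floorScaled ξ c P k n ≤ Ptot k := fun k =>
    sum_floorScaled_le hξ.le (hc1 k) (hP0 k) (hPsum k) (by rw [Fintype.card_fin, hcP k])
  have hM0 : 0 ≤ M := by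
    obtain ⟨k, l, n, rfl⟩ := hM.1
    exact div_nonneg (mul_nonneg (hw l).le (hg l k n).le) (hσ l n).le
  have hloss := wsr_sub_wsr_le (fun k l n => (hg k l n).le) hσ (fun k => (hw k).le) hΓ hP0
    (fun k n => (hQbox k n).1) hξ.le hc0 hc1 (fun k n => le_max_right _ _)
    (fun k n => floorScaled_le_add hξ.le (hc0 k) (hc1 k) (hP0 k n))
    (fun k => by rw [← hcP k]; exact mul_le_mul_of_nonneg_left (hPsum k) (hc0 k)) hM0
    (fun k l n => hM.2 ⟨l, k, n, rfl⟩)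
  have hK : (K : ℝ) ≤ K ^ 2 := by exact_mod_cast Nat.le_self_pow two_ne_zero K
  have hmem := hfstar.csSup_image_mem_Icc_of_subset (s := {Q ∈ _ | ∀ k n, ξ ≤ Q k n})
    (Set.sep_subset _ _) (x := floorScaled ξ c P) ⟨⟨hQbox, hQsum⟩, hQξ⟩
    (b := wsr K N g σ2 w Γ P - 2 * ξ * N * K ^ 2 * M) (by
      nlinarith [mul_le_mul_of_nonneg_left hK (by positivity : (0 : ℝ) ≤ ξ * N * M)])
  exact ⟨hmem.2, hmem.1⟩

/-- Theorem 2: with `f*` the maximum weighted sum rate over the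
feasible set `𝒫`, and `f*(ξ)` the supremum after adding the entrywise lower-bound
constraints `P_{kn} ≥ ξ`, if `0 < ξ ≤ P_k^tot/(2N(N+1))` for every `k` and
`ξ ≤ P_{kn}^mask` for all `k,n`, then
`f* ≥ f*(ξ) ≥ f* − 2ξNK²·max_{k,l,n}(w_l g_{lkn}/σ_{ln}²)`. -/
theorem gp_lower_bound_loss (K N : ℕ) (hK : 1 ≤ K) (hN : 1 ≤ N)
    (g : Fin K → Fin K → Fin N → ℝ) (hg : ∀ k l n, 0 < g k l n)
    (σ2 : Fin K → Fin N → ℝ) (hσ : ∀ k n, 0 < σ2 k n)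
    (w : Fin K → ℝ) (hw : ∀ k, 0 < w k) (Γ : ℝ) (hΓ : 1 ≤ Γ)
    (Ptot : Fin K → ℝ) (hPtot : ∀ k, 0 < Ptot k)
    (Pmask : Fin K → Fin N → ℝ) (hPmask : ∀ k n, 0 < Pmask k n)
    (feas : Set (Fin K → Fin N → ℝ))
    (hfeas : feas =
      {P | (∀ k n, 0 ≤ P k n ∧ P k n ≤ Pmask k n) ∧ ∀ k, ∑ n, P k n ≤ Ptot k})
    (fstar : ℝ) (hfstar : IsGreatest (wsr K N g σ2 w Γ '' feas) fstar)
    (M : ℝ)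
    (hM : IsGreatest {x : ℝ | ∃ k l : Fin K, ∃ n : Fin N, x = w l * g l k n / σ2 l n} M)
    (ξ : ℝ) (hξ : 0 < ξ)
    (hξtot : ∀ k, ξ ≤ Ptot k / (2 * N * (N + 1)))
    (hξmask : ∀ k n, ξ ≤ Pmask k n) :
    fstar ≥ sSup (wsr K N g σ2 w Γ '' {P ∈ feas | ∀ k n, ξ ≤ P k n}) ∧
      sSup (wsr K N g σ2 w Γ '' {P ∈ feas | ∀ k n, ξ ≤ P k n}) ≥
        fstar - 2 * ξ * N * K ^ 2 * M :=
  gp_lower_bound_loss_general K N g hg σ2 hσ w hw Γ hΓ Ptot hPtot Pmask feas hfeas fstar hfstar M hM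
    ξ hξ hξtot hξmask
end

section
/- Fix integers K ≥ 1 and N ≥ 1. Let sum-power budgets P_k^tot > 0 and spectral masks P_{kn}^mask > 0 be given, and suppose 0 < ξ ≤ P_k^tot/(2N(N+1)) for every k and ξ ≤ P_{kn}^mask for every k,n. Then for every P ∈ 𝒫 there exists P'' ∈ 𝒫 such that P''_{kn} ≥ ξ for all k,n and Σ_{k=1}^K Σ_{n=1}^N |P''_{kn} − P_{kn}| ≤ 2·N·K·ξ. -/
/-!
Scale each user's row by `t = 1 - Nξ/P_k^tot` and then raise every entry to at least `ξ`.
Scaling frees `Nξ` of the budget, which pays for the raising (each entry grows by at most `ξ`),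
and the ℓ¹ change is at most `Nξ` from raising plus `(1 - t) · Σₙ Pₖₙ ≤ Nξ` from scaling.
-/

open Finset

lemma max_mul_le_mul_add {t a ξ : ℝ} (ha : 0 ≤ a) (ht : 0 ≤ t) (hξ : 0 ≤ ξ) :
    max (t * a) ξ ≤ t * a + ξ :=
  max_le (by linarith) (by nlinarith)

lemma abs_max_mul_sub_le {t a ξ : ℝ} (ha : 0 ≤ a) (ht : t ≤ 1) (hξ : 0 ≤ ξ) :
    |max (t * a) ξ - a| ≤ ξ + (1 - t) * a := by
  rw [abs_le]
  constructor <;> cases max_cases (t * a) ξ <;> nlinarith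

theorem exists_row_perturbation {ι : Type*} [Fintype ι] (p mask : ι → ℝ) (tot ξ : ℝ)
    (hp : ∀ n, 0 ≤ p n ∧ p n ≤ mask n) (hsum : ∑ n, p n ≤ tot) (htot : 0 < tot)
    (hξ : 0 ≤ ξ) (hξmask : ∀ n, ξ ≤ mask n) (hξtot : Fintype.card ι * ξ ≤ tot) :
    ∃ q : ι → ℝ, ((∀ n, 0 ≤ q n ∧ q n ≤ mask n) ∧ ∑ n, q n ≤ tot) ∧ (∀ n, ξ ≤ q n) ∧
      ∑ n, |q n - p n| ≤ 2 * Fintype.card ι * ξ := by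
  set c := Fintype.card ι * ξ / tot
  have hc₀ : 0 ≤ c := by positivity
  have hc₁ : c ≤ 1 := (div_le_one htot).2 hξtot
  have hc_tot : c * tot = Fintype.card ι * ξ := div_mul_cancel₀ _ htot.ne'
  have hcard_sum : ∑ _n : ι, ξ = Fintype.card ι * ξ := by simp
  refine ⟨fun n => max ((1 - c) * p n) ξ, ⟨fun n => ⟨?_, ?_⟩, ?_⟩, fun n => le_max_right _ _, ?_⟩
  · exact hξ.trans (le_max_right _ _)
  · exact max_le (by nlinarith [hp n]) (hξmask n)
  · calc ∑ n, max ((1 - c) * p n) ξ ≤ ∑ n, ((1 - c) * p n + ξ) :=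
          sum_le_sum fun n _ => max_mul_le_mul_add (hp n).1 (by linarith) hξ
      _ = (1 - c) * ∑ n, p n + c * tot := by rw [sum_add_distrib, ← mul_sum, hcard_sum, hc_tot]
      _ ≤ tot := by nlinarith
  · calc ∑ n, |max ((1 - c) * p n) ξ - p n| ≤ ∑ n, (ξ + (1 - (1 - c)) * p n) :=
          sum_le_sum fun n _ => abs_max_mul_sub_le (hp n).1 (by linarith) hξ
      _ = Fintype.card ι * ξ + c * ∑ n, p n := by
          rw [sum_add_distrib, ← mul_sum, hcard_sum, sub_sub_cancel]
      _ ≤ 2 * Fintype.card ι * ξ := by nlinarith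

theorem feasible_perturbation_general (K N : ℕ) (hN : 1 ≤ N)
    (Ptot : Fin K → ℝ) (hPtot : ∀ k, 0 < Ptot k)
    (Pmask : Fin K → Fin N → ℝ)
    (ξ : ℝ) (hξ : 0 < ξ)
    (hξtot : ∀ k, ξ ≤ Ptot k / (2 * N * (N + 1)))
    (hξmask : ∀ k n, ξ ≤ Pmask k n)
    (P : Fin K → Fin N → ℝ)
    (hPfeas : (∀ k n, 0 ≤ P k n ∧ P k n ≤ Pmask k n) ∧ ∀ k, ∑ n, P k n ≤ Ptot k) :
    ∃ P'' : Fin K → Fin N → ℝ,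
      ((∀ k n, 0 ≤ P'' k n ∧ P'' k n ≤ Pmask k n) ∧ ∀ k, ∑ n, P'' k n ≤ Ptot k) ∧
        (∀ k n, ξ ≤ P'' k n) ∧
          ∑ k, ∑ n, |P'' k n - P k n| ≤ 2 * N * K * ξ := by
  have hNξ : ∀ k, Fintype.card (Fin N) * ξ ≤ Ptot k := by
    intro k
    have hN' : (1 : ℝ) ≤ N := by exact_mod_cast hN
    have := (le_div_iff₀ (by positivity)).1 (hξtot k)
    rw [Fintype.card_fin]
    nlinarith [mul_nonneg (by positivity : (0 : ℝ) ≤ N * (2 * N + 1)) hξ.le]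
  choose Q hQ using fun k => exists_row_perturbation (P k) (Pmask k) (Ptot k) ξ
    (hPfeas.1 k) (hPfeas.2 k) (hPtot k) hξ.le (hξmask k) (hNξ k)
  refine ⟨Q, ⟨fun k => (hQ k).1.1, fun k => (hQ k).1.2⟩, fun k => (hQ k).2.1, ?_⟩
  calc ∑ k, ∑ n, |Q k n - P k n| ≤ ∑ _k : Fin K, 2 * N * ξ := by
        gcongr with k
        simpa using (hQ k).2.2
    _ = 2 * N * K * ξ := by rw [sum_const, card_univ, Fintype.card_fin, nsmul_eq_mul]; ring

/-- every feasible power allocation can be perturbed, with total ℓ¹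
change at most `2NKξ`, into a feasible allocation satisfying the additional entrywise
lower-bound constraints `P_{kn} ≥ ξ`, provided `0 < ξ ≤ P_k^tot/(2N(N+1))` for every
`k` and `ξ ≤ P_{kn}^mask` for all `k,n`. -/
theorem feasible_perturbation (K N : ℕ) (hK : 1 ≤ K) (hN : 1 ≤ N)
    (Ptot : Fin K → ℝ) (hPtot : ∀ k, 0 < Ptot k)
    (Pmask : Fin K → Fin N → ℝ) (hPmask : ∀ k n, 0 < Pmask k n)
    (ξ : ℝ) (hξ : 0 < ξ)
    (hξtot : ∀ k, ξ ≤ Ptot k / (2 * N * (N + 1)))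
    (hξmask : ∀ k n, ξ ≤ Pmask k n)
    (P : Fin K → Fin N → ℝ)
    (hPfeas : (∀ k n, 0 ≤ P k n ∧ P k n ≤ Pmask k n) ∧ ∀ k, ∑ n, P k n ≤ Ptot k) :
    ∃ P'' : Fin K → Fin N → ℝ,
      ((∀ k n, 0 ≤ P'' k n ∧ P'' k n ≤ Pmask k n) ∧ ∀ k, ∑ n, P'' k n ≤ Ptot k) ∧
        (∀ k n, ξ ≤ P'' k n) ∧
          ∑ k, ∑ n, |P'' k n - P k n| ≤ 2 * N * K * ξ :=
  feasible_perturbation_general K N hN Ptot hPtot Pmask ξ hξ hξtot hξmask P hPfeas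
end
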